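/- arXiv:1111.1033 — 6 statements merged into one kernel-verified Lean document; each statement's English description precedes it below -/
import Mathlib

section
/- Let n ≥ 2 and for 1 ≤ j ≤ i ≤ n-1 let a_{ij} > 0. Define the upper-triangular unipotent matrix g = ∏_{l=1}^{n-1} ∏_{k=1}^{n-l} s_{n-k}(a_{n-k,n-k-l+1}), where s_i(t) = I_n + t E_{i,i+1}. Let x_{i,j} (for 1 ≤ i < j ≤ n) be the determinant of the i×i minor of g with rows 1,…,i and columns j-i+1,…,j. Then x_{i,i+j} = ∏_{m=1}^{j} ∏_{p=1}^{i} a_{m+p-1,p}, with the convention x_{i,i} = x_{i,0} = x_{0,j} = 1. -/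
/-- The elementary unipotent matrix `s_i(t) = Iₙ + t E_{i,i+1}` (1-based index `i`):
the off-diagonal entry `t` sits in 1-based position `(i, i+1)`. -/
def elemU (n : ℕ) (i : ℕ) (t : ℝ) : Matrix (Fin n) (Fin n) ℝ :=
  Matrix.of fun p q =>
    (if p = q then (1 : ℝ) else 0) +
    (if (p : ℕ) + 1 = i ∧ (q : ℕ) = i then t else 0)

/-- The totally positive upper unipotent matrix
`g = ∏_{l=1}^{n-1} ∏_{k=1}^{n-l} s_{n-k}(a_{n-k, n-k-l+1})`
(products taken in the stated order; here `l, k` are re-indexed from `0`). -/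
def posUnip (n : ℕ) (a : ℕ → ℕ → ℝ) : Matrix (Fin n) (Fin n) ℝ :=
  ((List.range (n - 1)).map (fun l =>
    ((List.range (n - 1 - l)).map (fun k =>
      elemU n (n - 1 - k) (a (n - 1 - k) (n - 1 - k - l)))).prod)).prod

/-- The cluster variable `x_{i,j}`: the determinant of the `i×i` minor of `g` with
rows `1,…,i` and columns `j-i+1,…,j` (1-based), with the convention
`x_{i,i} = x_{i,0} = x_{0,j} = 1` (and `1` for out-of-range indices). -/
noncomputable def clusterX (n : ℕ) (g : Matrix (Fin n) (Fin n) ℝ) (i j : ℕ) : ℝ :=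
  if h : 1 ≤ i ∧ i < j ∧ j ≤ n then
    Matrix.det (Matrix.of fun p q : Fin i =>
      g ⟨p.1, by have := p.2; omega⟩ ⟨j - i + q.1, by have := q.2; omega⟩)
  else 1

/-!
Grouping the factors of `g` by `l` (indices `0`-based), the `l`-th group is the unipotent upper
bidiagonal matrix `B_l` whose entry in column `q` is `a_{q, q-l}` for `q > l` and `0` otherwise.
Right multiplication by `B_l` adds multiples of each column to the next one; for `l ≥ j` it does
not touch column `j`, so the minor on rows `0, …, i-1` and columns `j, …, j+i-1` gets multiplied by
the determinant `1` of a unipotent bidiagonal block. The minor of `g = B_0 ⋯ B_{n-2}` is therefore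
the same minor of `B_0 ⋯ B_{j-1}`. That product vanishes outside the band `p ≤ q ≤ p + j`, so the
minor is lower triangular, and its diagonal entry in row `p` is `∏_{l<j} a_{p+l+1, p+1}`.
-/

open Matrix

section CommSemiring

variable {R : Type*} [CommSemiring R] {n : ℕ}

/-- Entry `(q-1, q)` is `t q`; the value `t 0` is never used. -/
def unipBidiag (n : ℕ) (t : ℕ → R) : Matrix (Fin n) (Fin n) R :=
  of fun p q => (if p = q then 1 else 0) + if (q : ℕ) = p + 1 then t q else 0

theorem mul_unipBidiag_apply {ι : Type*} (M : Matrix ι (Fin n) R) (t : ℕ → R) (p : ι)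
    (q : Fin n) :
    (M * unipBidiag n t) p q =
      M p q + if (q : ℕ) = 0 then 0 else M p ⟨q - 1, (Nat.sub_le _ _).trans_lt q.isLt⟩ * t q := by
  simp only [mul_apply, unipBidiag, of_apply, mul_add, Finset.sum_add_distrib, mul_ite, mul_one,
    mul_zero, Finset.sum_ite_eq', Finset.mem_univ, if_true]
  congr 1
  split_ifs with hq
  · exact Finset.sum_eq_zero fun r _ => if_neg (by omega)
  · rw [Finset.sum_eq_single ⟨q - 1, (Nat.sub_le _ _).trans_lt q.isLt⟩]
    · exact if_pos (by simp only; omega)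
    · intro r _ hr
      exact if_neg fun h => hr (Fin.ext (by simp only; omega))
    · simp

theorem unipBidiag_mul_unipBidiag (t s : ℕ → R) (h : ∀ q, t q * s (q + 1) = 0) :
    unipBidiag n t * unipBidiag n s = unipBidiag n (t + s) := by
  ext p q
  rw [mul_unipBidiag_apply]
  simp only [unipBidiag, of_apply, Pi.add_apply, Fin.ext_iff]
  split_ifs
  all_goals first | omega | simp only [add_zero, zero_add, zero_mul, one_mul]
  obtain ⟨r, hr⟩ : ∃ r, (q : ℕ) = r + 1 := ⟨q - 1, by omega⟩
  simpa [hr] using h r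

def bidiagProd (n : ℕ) (t : ℕ → ℕ → R) (m : ℕ) : Matrix (Fin n) (Fin n) R :=
  ((List.range m).map fun l => unipBidiag n (t l)).prod

theorem bidiagProd_succ (t : ℕ → ℕ → R) (m : ℕ) :
    bidiagProd n t (m + 1) = bidiagProd n t m * unipBidiag n (t m) := by
  simp [bidiagProd, List.range_succ]

theorem bidiagProd_apply_eq_zero (t : ℕ → ℕ → R) (m : ℕ) (p q : Fin n)
    (h : (q : ℕ) < p ∨ (p : ℕ) + m < q) : bidiagProd n t m p q = 0 := by
  induction m generalizing q with
  | zero => exact one_apply_ne fun hpq => by subst hpq; omega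
  | succ m ih =>
    rw [bidiagProd_succ, mul_unipBidiag_apply, ih q (by omega)]
    split_ifs
    · simp
    · rw [ih _ (by simp only; omega), zero_mul, zero_add]

theorem bidiagProd_apply_of_eq_add (t : ℕ → ℕ → R) (m : ℕ) (p q : Fin n)
    (h : (q : ℕ) = p + m) : bidiagProd n t m p q = ∏ l ∈ Finset.range m, t l (p + l + 1) := by
  induction m generalizing q with
  | zero => simp [bidiagProd, show p = q from Fin.ext (by omega)]
  | succ m ih =>
    rw [bidiagProd_succ, mul_unipBidiag_apply, bidiagProd_apply_eq_zero t m p q (by omega),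
      if_neg (by omega), ih _ (by simp only; omega), Finset.prod_range_succ, h, zero_add]
    rfl

theorem submatrix_mul_unipBidiag {ι κ : Type*} (M : Matrix ι (Fin n) R) (t : ℕ → R)
    (f : κ → ι) {c i : ℕ} (h : c + i ≤ n) (ht : t c = 0) :
    (M * unipBidiag n t).submatrix f (Fin.castLE h ∘ Fin.natAdd c) =
      M.submatrix f (Fin.castLE h ∘ Fin.natAdd c) * unipBidiag i (fun q => t (c + q)) := by
  ext p q
  simp only [submatrix_apply, mul_unipBidiag_apply, Function.comp_apply]
  congr 1
  by_cases hq : (q : ℕ) = 0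
  · simp [hq, ht]
  · simp only [Fin.val_castLE, Fin.val_natAdd, hq, if_false, Nat.add_eq_zero_iff, and_false]
    congr 2
    ext
    simp only [Fin.val_castLE, Fin.val_natAdd]
    omega

end CommSemiring

section CommRing

variable {R : Type*} [CommRing R] {n : ℕ}

theorem det_unipBidiag (t : ℕ → R) : (unipBidiag n t).det = 1 := by
  rw [det_of_isUpperTriangular]
  · exact Finset.prod_eq_one fun r _ => by simp [unipBidiag]
  · intro p q (hpq : q < p)
    simp [unipBidiag, hpq.ne', show (q : ℕ) ≠ p + 1 by omega]

theorem det_submatrix_bidiagProd {i c : ℕ} (t : ℕ → ℕ → R) (f : Fin i → Fin n) (h : c + i ≤ n)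
    (ht : ∀ l, c ≤ l → t l c = 0) {m : ℕ} (hm : c ≤ m) :
    ((bidiagProd n t m).submatrix f (Fin.castLE h ∘ Fin.natAdd c)).det =
      ((bidiagProd n t c).submatrix f (Fin.castLE h ∘ Fin.natAdd c)).det := by
  induction m, hm using Nat.le_induction with
  | base => rfl
  | succ m hm ih =>
    rw [bidiagProd_succ, submatrix_mul_unipBidiag _ _ _ h (ht m hm), det_mul, det_unipBidiag,
      mul_one, ih]

theorem det_submatrix_bidiagProd_self {i c : ℕ} (t : ℕ → ℕ → R) (h : c + i ≤ n) :
    ((bidiagProd n t c).submatrix (Fin.castLE (le_of_add_le_right h))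
      (Fin.castLE h ∘ Fin.natAdd c)).det = ∏ p : Fin i, ∏ l ∈ Finset.range c, t l (p + l + 1) := by
  rw [det_of_isLowerTriangular]
  · exact Finset.prod_congr rfl fun p _ => bidiagProd_apply_of_eq_add t c _ _ (by simp [add_comm])
  · intro p q (hpq : p < q)
    exact bidiagProd_apply_eq_zero t c _ _ (Or.inr (by simp; omega))

end CommRing

theorem elemU_eq_unipBidiag (n i : ℕ) (s : ℝ) : elemU n i s = unipBidiag n (Pi.single i s) := by
  ext p q
  simp only [elemU, unipBidiag, of_apply, Pi.single_apply]
  congr 1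
  split_ifs <;> first | rfl | omega

theorem prod_elemU_eq_unipBidiag {n c : ℕ} (hc : c < n) (u : ℕ → ℝ) :
    ((List.range c).map fun k => elemU n (n - 1 - k) (u (n - 1 - k))).prod =
      unipBidiag n (fun q => if n - c ≤ q then u q else 0) := by
  induction c with
  | zero =>
    ext p q
    simp [unipBidiag, one_apply]
  | succ c ih =>
    rw [List.range_succ, List.map_append, List.prod_append, ih (by omega), List.map_singleton,
      List.prod_singleton, elemU_eq_unipBidiag, unipBidiag_mul_unipBidiag]
    · congr 1
      ext q
      simp only [Pi.add_apply, Pi.single_apply]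
      split_ifs <;> first | omega | simp_all
    · intro q
      simp only [Pi.single_apply]
      split_ifs <;> first | omega | simp

def posUnipLayer (a : ℕ → ℕ → ℝ) (l q : ℕ) : ℝ :=
  if l < q then a q (q - l) else 0

theorem posUnip_eq_bidiagProd (n : ℕ) (a : ℕ → ℕ → ℝ) :
    posUnip n a = bidiagProd n (posUnipLayer a) (n - 1) := by
  refine congrArg List.prod (List.map_congr_left fun l hl => ?_)
  rw [List.mem_range] at hl
  rw [prod_elemU_eq_unipBidiag (u := fun q => a q (q - l)) (by omega)]
  congr 1
  ext q
  simp only [posUnipLayer]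
  congr 1
  exact propext (by omega)

theorem clusterX_eq_det_submatrix {n i j : ℕ} (g : Matrix (Fin n) (Fin n) ℝ) (hi : 1 ≤ i)
    (hj : 1 ≤ j) (h : j + i ≤ n) :
    clusterX n g i (i + j) =
      (g.submatrix (Fin.castLE (le_of_add_le_right h)) (Fin.castLE h ∘ Fin.natAdd j)).det := by
  rw [clusterX, dif_pos ⟨hi, by omega, by omega⟩]
  congr
  ext p q
  congr 1
  ext
  simp only [Function.comp_apply, Fin.val_castLE, Fin.val_natAdd]
  omega

theorem clusterX_prod_general (n : ℕ) (a : ℕ → ℕ → ℝ)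
    (i j : ℕ) (hi : 1 ≤ i) (hj : 1 ≤ j) (hij : i + j ≤ n) :
    clusterX n (posUnip n a) i (i + j)
      = ∏ m ∈ Finset.range j, ∏ p ∈ Finset.range i, a (m + p + 1) (p + 1) := by
  have h : j + i ≤ n := by omega
  have layer_zero : ∀ l, j ≤ l → posUnipLayer a l j = 0 := fun l hl => if_neg (by omega)
  rw [clusterX_eq_det_submatrix _ hi hj h, posUnip_eq_bidiagProd,
    det_submatrix_bidiagProd _ _ h layer_zero (by omega), det_submatrix_bidiagProd_self,
    Fin.prod_univ_eq_prod_range (fun p => ∏ l ∈ Finset.range j, posUnipLayer a l (p + l + 1)),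
    Finset.prod_comm]
  refine Finset.prod_congr rfl fun m _ => Finset.prod_congr rfl fun p _ => ?_
  rw [posUnipLayer, if_pos (by omega)]
  congr 1 <;> omega

/-- For positive parameters `a_{ij}` (`1 ≤ j ≤ i ≤ n-1`), the cluster variables of the
unipotent matrix `g` satisfy `x_{i,i+j} = ∏_{m=1}^{j} ∏_{p=1}^{i} a_{m+p-1,p}`. -/
theorem clusterX_prod (n : ℕ) (hn : 2 ≤ n) (a : ℕ → ℕ → ℝ)
    (ha : ∀ i j : ℕ, 1 ≤ j → j ≤ i → i ≤ n - 1 → 0 < a i j)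
    (i j : ℕ) (hi : 1 ≤ i) (hj : 1 ≤ j) (hij : i + j ≤ n) :
    clusterX n (posUnip n a) i (i + j)
      = ∏ m ∈ Finset.range j, ∏ p ∈ Finset.range i, a (m + p + 1) (p + 1) :=
  clusterX_prod_general n a i j hi hj hij
end

section
/- With notation as in the cluster parametrization of upper unipotent totally positive matrices, the inverse change of variables is a_{i,j} = (x_{j,i+1} x_{j-1,i-1})/(x_{j,i} x_{j-1,i}), where x_{i,i} = x_{i,0} = x_{0,j} = 1. -/
/-!
Peeling off the factors with `l = 1` writes `g = B · (1 ⊕ g')`, where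
`B = s_{n-1}(a_{n-1,n-1}) ⋯ s_1(a_{1,1})` is upper bidiagonal and `g'` is the matrix of the same
shape built from the parameters `a_{i+1,j}`. Hence an initial minor of `g` whose columns are
shifted by `d ≥ 1` is a lower bidiagonal matrix with diagonal `a_{1,1}, …, a_{r,r}` times the
minor of `g'` with shift `d - 1`, and by induction `x_{r,r+d} = ∏_{q ≤ r} ∏_{q ≤ i < q + d} a_{i,q}`.
The ratio in the theorem telescopes to the single factor `a_{i,j}`.
-/

open Matrix Finset

section UnipEntry

variable {R : Type*} [CommRing R]

/-- `unipEntry a p q` is the 1-based `(p, q)` entry of `posUnip n a` for every `n ≥ p, q`.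
Row and column `0` are those of the identity, so that the recursion mirrors `g = B · (1 ⊕ g')`. -/
def unipEntry : (ℕ → ℕ → R) → ℕ → ℕ → R
  | _, 0, 0 => 1
  | _, 0, _ + 1 => 0
  | _, _ + 1, 0 => 0
  | a, p + 1, q + 1 =>
      unipEntry (fun i => a (i + 1)) p q +
        a (p + 1) (p + 1) * unipEntry (fun i => a (i + 1)) (p + 1) q

variable (a : ℕ → ℕ → R)

@[simp] lemma unipEntry_zero_succ (q : ℕ) : unipEntry a 0 (q + 1) = 0 := rfl

lemma unipEntry_succ_succ (p q : ℕ) :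
    unipEntry a (p + 1) (q + 1) =
      unipEntry (fun i => a (i + 1)) p q +
        a (p + 1) (p + 1) * unipEntry (fun i => a (i + 1)) (p + 1) q :=
  rfl

lemma unipEntry_of_lt {p q : ℕ} (h : q < p) : unipEntry a p q = 0 := by
  induction q generalizing a p with
  | zero => obtain ⟨p, rfl⟩ := Nat.exists_eq_add_of_lt h; rfl
  | succ q ih =>
    obtain ⟨p, rfl⟩ := Nat.exists_eq_add_of_lt h
    rw [unipEntry_succ_succ, ih _ (by omega), ih _ (by omega), mul_zero, add_zero]

@[simp] lemma unipEntry_self (p : ℕ) : unipEntry a p p = 1 := by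
  induction p generalizing a with
  | zero => rfl
  | succ p ih =>
    rw [unipEntry_succ_succ, ih, unipEntry_of_lt _ p.lt_succ_self, mul_zero, add_zero]

end UnipEntry

lemma sum_ite_val_succ_eq {M : Type*} [AddCommMonoid M] {r : ℕ} (f : ℕ → M) (hf : f 0 = 0)
    (p : Fin r) :
    ∑ k : Fin r, (if (k : ℕ) + 1 = p then f (k + 1) else 0) = f p := by
  obtain ⟨_ | p, hp⟩ := p
  · simp [hf]
  · rw [sum_eq_single ⟨p, by omega⟩
      (fun k _ hk => if_neg fun h => hk (Fin.ext (by simpa using h))) (by simp)]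
    simp

section Minor

variable {R : Type*} [CommRing R]

def clusterMonomial (a : ℕ → ℕ → R) (r d : ℕ) : R :=
  ∏ q ∈ range r, ∏ e ∈ range d, a (q + 1 + e) (q + 1)

lemma clusterMonomial_zero_right (a : ℕ → ℕ → R) (r : ℕ) : clusterMonomial a r 0 = 1 := by
  simp [clusterMonomial]

lemma clusterMonomial_succ_right (a : ℕ → ℕ → R) (r d : ℕ) :
    clusterMonomial a r (d + 1) =
      clusterMonomial a r d * ∏ q ∈ range r, a (q + 1 + d) (q + 1) := by
  simp only [clusterMonomial, prod_range_succ, prod_mul_distrib]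

lemma clusterMonomial_succ_right_eq_shift (a : ℕ → ℕ → R) (r d : ℕ) :
    clusterMonomial a r (d + 1) =
      (∏ q ∈ range r, a (q + 1) (q + 1)) * clusterMonomial (fun i => a (i + 1)) r d := by
  simp only [clusterMonomial, prod_range_succ', ← prod_mul_distrib]
  refine prod_congr rfl fun q _ => ?_
  rw [mul_comm]
  rfl

lemma clusterMonomial_exchange (a : ℕ → ℕ → R) (r d : ℕ) :
    a (r + 1 + d) (r + 1) * (clusterMonomial a (r + 1) d * clusterMonomial a r (d + 1)) =
      clusterMonomial a (r + 1) (d + 1) * clusterMonomial a r d := by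
  simp only [clusterMonomial_succ_right, prod_range_succ]
  ring

lemma unipEntry_minor_succ (a : ℕ → ℕ → R) (r d : ℕ) :
    (of fun p c : Fin r => unipEntry a (p + 1) (d + 1 + c + 1)) =
      (diagonal (fun p : Fin r => a (p + 1) (p + 1)) +
          of fun p k : Fin r => if (k : ℕ) + 1 = p then 1 else 0) *
        of fun p c : Fin r => unipEntry (fun i => a (i + 1)) (p + 1) (d + c + 1) := by
  ext p c
  rw [add_mul, Matrix.add_apply, diagonal_mul, mul_apply]
  simp only [of_apply, ite_mul, one_mul, zero_mul]
  rw [sum_ite_val_succ_eq (fun k => unipEntry (fun i => a (i + 1)) k (d + c + 1)) rfl,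
    show d + 1 + (c : ℕ) + 1 = d + c + 1 + 1 by omega, unipEntry_succ_succ, add_comm]

theorem det_unipEntry_minor (r d : ℕ) (a : ℕ → ℕ → R) :
    (of fun p c : Fin r => unipEntry a (p + 1) (d + c + 1)).det = clusterMonomial a r d := by
  induction d generalizing a with
  | zero =>
    rw [clusterMonomial_zero_right, det_of_isUpperTriangular]
    · simp
    · intro p c hcp
      exact unipEntry_of_lt a (by simpa [Nat.add_comm] using hcp)
  | succ d ih =>
    rw [unipEntry_minor_succ, det_mul, ih, det_of_isLowerTriangular,
      clusterMonomial_succ_right_eq_shift,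
      ← Fin.prod_univ_eq_prod_range (fun p => a (p + 1) (p + 1))]
    · simp
    · intro p k hpk
      have : (p : ℕ) < k := hpk
      simp [diagonal_apply_ne _ (Fin.ne_of_lt this)]
      omega

end Minor

section PadOne

variable {R : Type*} [Semiring R]

def padOne (m : ℕ) : Matrix (Fin m) (Fin m) R →* Matrix (Fin (m + 1)) (Fin (m + 1)) R where
  toFun M := of (vecCons (vecCons 1 0) fun p => vecCons 0 (M p))
  map_one' := by
    ext i j
    refine Fin.cases ?_ (fun i => ?_) i <;> refine Fin.cases ?_ (fun j => ?_) j <;>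
      simp [one_apply, Fin.succ_ne_zero, (Fin.succ_ne_zero _).symm]
  map_mul' A B := by
    ext i j
    refine Fin.cases ?_ (fun i => ?_) i <;> refine Fin.cases ?_ (fun j => ?_) j <;>
      simp [mul_apply, Fin.sum_univ_succ]

variable {m : ℕ} (M : Matrix (Fin m) (Fin m) R)

@[simp] lemma padOne_zero_zero : padOne m M 0 0 = 1 := rfl

@[simp] lemma padOne_zero_succ (q : Fin m) : padOne m M 0 q.succ = 0 := rfl

@[simp] lemma padOne_succ_zero (p : Fin m) : padOne m M p.succ 0 = 0 := rfl

@[simp] lemma padOne_succ_succ (p q : Fin m) : padOne m M p.succ q.succ = M p q := rfl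

end PadOne

lemma padOne_elemU {m i : ℕ} (hi : 1 ≤ i) (t : ℝ) :
    padOne m (elemU m i t) = elemU (m + 1) (i + 1) t := by
  ext p q
  refine Fin.cases ?_ (fun p => ?_) p <;> refine Fin.cases ?_ (fun q => ?_) q <;>
    simp [elemU, Fin.ext_iff, (Nat.one_le_iff_ne_zero.mp hi).symm]

lemma elemU_eq_one_add_single {n i : ℕ} (hi : 1 ≤ i) (hin : i < n) (t : ℝ) :
    elemU n i t = 1 + single ⟨i - 1, by omega⟩ ⟨i, hin⟩ t := by
  ext p q
  simp only [elemU, of_apply, Matrix.add_apply, one_apply, single_apply, Fin.ext_iff]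
  congr 1
  by_cases h : (p : ℕ) + 1 = i ∧ (q : ℕ) = i
  · rw [if_pos h, if_pos ⟨by omega, h.2.symm⟩]
  · rw [if_neg h, if_neg (by omega)]

def bidiag (n : ℕ) (c : ℕ → ℝ) (k : ℕ) : Matrix (Fin n) (Fin n) ℝ :=
  1 + of fun p q : Fin n => if (q : ℕ) = p + 1 ∧ n ≤ q + k then c q else 0

lemma bidiag_mul_single {n k : ℕ} (c : ℕ → ℝ) (hk : k + 1 < n) :
    bidiag n c k *
        (1 + single ⟨n - 1 - k - 1, by omega⟩ ⟨n - 1 - k, by omega⟩ (c (n - 1 - k))) =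
      bidiag n c (k + 1) := by
  ext p q
  by_cases hq : q = ⟨n - 1 - k, by omega⟩
  · subst hq
    simp [mul_add, bidiag, one_apply, Fin.ext_iff]
    split_ifs <;> first | (exfalso; omega) | ring
  · simp only [Fin.ext_iff] at hq
    simp [mul_add, bidiag, one_apply, Fin.ext_iff, hq]
    split_ifs <;> first | (exfalso; omega) | rfl

lemma prod_elemU_eq_bidiag {n : ℕ} (c : ℕ → ℝ) {k : ℕ} (hk : k ≤ n - 1) :
    ((List.range k).map fun l => elemU n (n - 1 - l) (c (n - 1 - l))).prod = bidiag n c k := by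
  induction k with
  | zero =>
    ext p q
    simp [bidiag]
  | succ k ih =>
    rw [List.range_succ, List.map_append, List.prod_append, ih (by omega), List.map_singleton,
      List.prod_singleton, elemU_eq_one_add_single (by omega) (by omega),
      bidiag_mul_single c (by omega)]

lemma bidiag_mul_apply {n : ℕ} (c : ℕ → ℝ) (f : ℕ → ℕ → ℝ)
    (hf : ∀ p q, q < p → f p q = 0) (p q : Fin (n + 1)) :
    (bidiag (n + 1) c n * of fun k q : Fin (n + 1) => f k q) p q =
      f p q + c (p + 1 : ℕ) * f (p + 1 : ℕ) q := by
  rw [bidiag, add_mul, one_mul, Matrix.add_apply, of_apply, mul_apply]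
  congr 1
  simp only [of_apply, ite_mul, zero_mul]
  rw [Fin.sum_univ_eq_sum_range
    (fun k => if k = (p : ℕ) + 1 ∧ n + 1 ≤ k + n then c k * f k q else 0)]
  simp only [show ∀ k, (k = (p : ℕ) + 1 ∧ n + 1 ≤ k + n) ↔ k = p + 1 from fun k => by omega,
    sum_ite_eq', mem_range]
  split_ifs with hp
  · rfl
  · rw [hf _ _ (by omega), mul_zero]

lemma posUnip_succ (m : ℕ) (a : ℕ → ℕ → ℝ) :
    posUnip (m + 1) a =
      bidiag (m + 1) (fun i => a i i) m * padOne m (posUnip m fun i => a (i + 1)) := by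
  rcases m with _ | m
  · simp [posUnip, ← prod_elemU_eq_bidiag]
  · rw [posUnip, show List.range (m + 1 + 1 - 1) = 0 :: (List.range m).map Nat.succ from
      List.range_succ_eq_map, List.map_cons, List.prod_cons, ← prod_elemU_eq_bidiag _ (by omega),
      posUnip, map_list_prod]
    congr 1
    simp only [List.map_map, Nat.add_sub_cancel]
    refine congrArg List.prod (List.map_congr_left fun l hl => ?_)
    simp only [Function.comp_apply, map_list_prod, List.map_map, Nat.succ_eq_add_one,
      Nat.add_sub_add_right]
    refine congrArg List.prod (List.map_congr_left fun k hk => ?_)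
    rw [List.mem_range] at hl hk
    rw [Function.comp_apply, padOne_elemU (by omega)]
    congr 2 <;> omega

theorem posUnip_apply (n : ℕ) (a : ℕ → ℕ → ℝ) (p q : Fin n) :
    posUnip n a p q = unipEntry a (p + 1) (q + 1) := by
  induction n generalizing a with
  | zero => exact p.elim0
  | succ m ih =>
    have hpad : padOne m (posUnip m fun i => a (i + 1)) =
        of fun k q : Fin (m + 1) => unipEntry (fun i => a (i + 1)) k q := by
      ext k q
      refine Fin.cases ?_ (fun k => ?_) k <;> refine Fin.cases ?_ (fun q => ?_) q <;>
        simp [ih, unipEntry_of_lt]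
    rw [posUnip_succ, hpad, bidiag_mul_apply _ _ (fun _ _ => unipEntry_of_lt _),
      unipEntry_succ_succ]

theorem clusterX_posUnip (a : ℕ → ℕ → ℝ) {n r s : ℕ} (hs : s ≤ n) :
    clusterX n (posUnip n a) r s = clusterMonomial a r (s - r) := by
  rw [clusterX]
  split_ifs with h
  · rw [← det_unipEntry_minor]
    congr 1
    ext p c
    simp [posUnip_apply]
  · obtain rfl | hrs : r = 0 ∨ s - r = 0 := by omega
    · simp [clusterMonomial]
    · rw [hrs, clusterMonomial_zero_right]

lemma clusterMonomial_pos {a : ℕ → ℕ → ℝ} {r d : ℕ}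
    (ha : ∀ i j, 1 ≤ j → j ≤ i → i < r + d → 0 < a i j) : 0 < clusterMonomial a r d :=
  prod_pos fun q hq => prod_pos fun e he => by
    rw [mem_range] at hq he
    exact ha _ _ (by omega) (by omega) (by omega)

theorem a_eq_clusterX_ratio_general (n : ℕ) (a : ℕ → ℕ → ℝ)
    (ha : ∀ i j : ℕ, 1 ≤ j → j ≤ i → i ≤ n - 1 → 0 < a i j)
    (i j : ℕ) (hj : 1 ≤ j) (hji : j ≤ i) (hi : i ≤ n - 1) :
    a i j = (clusterX n (posUnip n a) j (i + 1) * clusterX n (posUnip n a) (j - 1) (i - 1))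
      / (clusterX n (posUnip n a) j i * clusterX n (posUnip n a) (j - 1) i) := by
  obtain ⟨r, rfl⟩ : ∃ r, j = r + 1 := ⟨j - 1, by omega⟩
  obtain ⟨d, rfl⟩ : ∃ d, i = r + 1 + d := ⟨i - (r + 1), by omega⟩
  have hpos (r' d' : ℕ) (h : r' + d' = r + 1 + d) : 0 < clusterMonomial a r' d' :=
    clusterMonomial_pos fun i j h₁ h₂ h₃ => ha i j h₁ h₂ (by omega)
  rw [Nat.add_one_sub_one, clusterX_posUnip a (by omega : r + 1 + d + 1 ≤ n),
    clusterX_posUnip a (by omega : r + 1 + d - 1 ≤ n),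
    clusterX_posUnip a (r := r + 1) (by omega : r + 1 + d ≤ n),
    clusterX_posUnip a (by omega : r + 1 + d ≤ n),
    show r + 1 + d + 1 - (r + 1) = d + 1 by omega, show r + 1 + d - 1 - r = d by omega,
    show r + 1 + d - (r + 1) = d by omega, show r + 1 + d - r = d + 1 by omega,
    eq_div_iff (mul_pos (hpos _ _ rfl) (hpos _ _ (by omega))).ne', clusterMonomial_exchange]

/-- Inverse change of variables of the cluster parametrization:
`a_{i,j} = (x_{j,i+1} x_{j-1,i-1}) / (x_{j,i} x_{j-1,i})`, with the convention
`x_{i,i} = x_{i,0} = x_{0,j} = 1`. -/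
theorem a_eq_clusterX_ratio (n : ℕ) (hn : 2 ≤ n) (a : ℕ → ℕ → ℝ)
    (ha : ∀ i j : ℕ, 1 ≤ j → j ≤ i → i ≤ n - 1 → 0 < a i j)
    (i j : ℕ) (hj : 1 ≤ j) (hji : j ≤ i) (hi : i ≤ n - 1) :
    a i j = (clusterX n (posUnip n a) j (i + 1) * clusterX n (posUnip n a) (j - 1) (i - 1))
      / (clusterX n (posUnip n a) j i * clusterX n (posUnip n a) (j - 1) i) :=
  a_eq_clusterX_ratio_general n a ha i j hj hji hi
end

section
/- Let g be an n×n matrix admitting a Gauss decomposition g = g_- g_0 g_+ with g_- lower unipotent, g_0 diagonal, g_+ upper unipotent. Then the (i,j) entry of g_+ (for i < j) equals det(N_i^j)/det(N_i), where N_i is the leading principal i×i submatrix of g and N_i^j is N_i with its last column replaced by (g_{1j}, …, g_{ij})^T. -/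
/-!
Write `g = A * gu` with `A = gl * g0` lower triangular. Rows `0, …, i` of `A * gu` only see the
leading `(i+1) × (i+1)` block of `A`, so every `(i+1) × (i+1)` minor of `g` on the first `i+1` rows
is `det Aᵢ` times the corresponding minor of `gu`. Choosing the columns `0, …, i-1, j`, the minor
of `gu` is upper triangular with diagonal `1, …, 1, gu i j`; hence `det Nᵢʲ = det Aᵢ * gu i j` and
`det Nᵢ = det Aᵢ`, which is nonzero by hypothesis.
-/

namespace Matrix

variable {R : Type*} {n k : ℕ}

theorem IsLowerTriangular.mul_submatrix_castLE [NonUnitalNonAssocSemiring R] {ι κ : Type*}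
    {A : Matrix (Fin n) (Fin n) R} (hA : A.IsLowerTriangular) (B : Matrix (Fin n) κ R)
    (h : k ≤ n) (c : ι → κ) :
    (A * B).submatrix (Fin.castLE h) c =
      A.submatrix (Fin.castLE h) (Fin.castLE h) * B.submatrix (Fin.castLE h) c := by
  ext s t
  refine (Fintype.sum_of_injective _ (Fin.castLE_injective h) _ _ ?_ fun _ => rfl).symm
  intro q hq
  have hsq : Fin.castLE h s < q := by
    rw [Fin.range_castLE, Set.mem_ofPred_eq, not_lt] at hq
    exact Fin.lt_def.2 (s.2.trans_le hq)
  exact mul_eq_zero_of_left (hA hsq) _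

theorem IsUpperTriangular.det_submatrix_castLE_update_last [CommRing R]
    {U : Matrix (Fin n) (Fin n) R} (hU : U.IsUpperTriangular) (hdiag : ∀ p, U p p = 1)
    (h : k + 1 ≤ n) (j : Fin n) :
    (U.submatrix (Fin.castLE h) (Function.update (Fin.castLE h) (Fin.last k) j)).det =
      U ⟨k, h⟩ j := by
  rw [det_of_isUpperTriangular]
  · rw [Fin.prod_univ_castSucc]
    simp only [submatrix_apply, Fin.castLE_castSucc, ne_eq, Fin.castSucc_ne_last,
      not_false_eq_true, Function.update_of_ne, hdiag, Finset.prod_const_one,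
      Function.update_self, one_mul]
    rfl
  · intro s t hts
    have ht : t ≠ Fin.last k := (hts.trans_le (Fin.le_last s)).ne
    simp only [submatrix_apply, Function.update_of_ne ht]
    exact hU hts

theorem det_submatrix_castLE_update_last_of_eq_mul [CommRing R]
    {g A U : Matrix (Fin n) (Fin n) R} (hg : g = A * U) (hA : A.IsLowerTriangular)
    (hU : U.IsUpperTriangular) (hdiag : ∀ p, U p p = 1) (h : k + 1 ≤ n) (j : Fin n) :
    (g.submatrix (Fin.castLE h) (Function.update (Fin.castLE h) (Fin.last k) j)).det =
      (A.submatrix (Fin.castLE h) (Fin.castLE h)).det * U ⟨k, h⟩ j := by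
  rw [hg, hA.mul_submatrix_castLE, det_mul, hU.det_submatrix_castLE_update_last hdiag]

end Matrix

/-- Gauss decomposition entry formula: if `g = g₋ g₀ g₊` with `g₋` lower unipotent,
`g₀` diagonal, `g₊` upper unipotent, and all leading principal minors of `g` are
nonzero, then for `i < j` the `(i,j)` entry of `g₊` equals `det(Nᵢʲ)/det(Nᵢ)`,
where `Nᵢ` is the leading principal minor of `g` of size `i` (1-based; here of size
`i+1` for the 0-based index `i`), and `Nᵢʲ` is `Nᵢ` with its last column replaced by
`(g_{1j}, …, g_{ij})ᵀ`. -/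
theorem gauss_upper_entry (n : ℕ) (g gl g0 gu : Matrix (Fin n) (Fin n) ℝ)
    (hdec : g = gl * g0 * gu)
    (hl : ∀ p q : Fin n, p < q → gl p q = 0)
    (hd : ∀ p q : Fin n, p ≠ q → g0 p q = 0)
    (hu : ∀ p q : Fin n, q < p → gu p q = 0) (hud : ∀ p : Fin n, gu p p = 1)
    (hminor : ∀ i : Fin n,
      Matrix.det (Matrix.of fun s t : Fin ((i : ℕ) + 1) =>
        g ⟨s.1, by have := s.2; have := i.2; omega⟩
          ⟨t.1, by have := t.2; have := i.2; omega⟩) ≠ 0)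
    (i j : Fin n) :
    gu i j =
      Matrix.det (Matrix.of fun s t : Fin ((i : ℕ) + 1) =>
        if (t : ℕ) = (i : ℕ) then
          g ⟨s.1, by have := s.2; have := i.2; omega⟩ j
        else
          g ⟨s.1, by have := s.2; have := i.2; omega⟩
            ⟨t.1, by have := t.2; have := i.2; omega⟩) /
      Matrix.det (Matrix.of fun s t : Fin ((i : ℕ) + 1) =>
        g ⟨s.1, by have := s.2; have := i.2; omega⟩
          ⟨t.1, by have := t.2; have := i.2; omega⟩) := by
  have hi : (i : ℕ) + 1 ≤ n := i.2
  have hA : (gl * g0).IsLowerTriangular :=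
    Matrix.BlockTriangular.mul (fun p q hpq => hl p q hpq)
      fun p q hpq => hd p q (show p < q from hpq).ne
  have hminor_eq := Matrix.det_submatrix_castLE_update_last_of_eq_mul hdec hA hu hud hi
  -- `Nᵢ` is the case `j = i` of `Nᵢʲ`.
  have hN : (Matrix.of fun s t : Fin ((i : ℕ) + 1) =>
      g ⟨s.1, by have := s.2; have := i.2; omega⟩ ⟨t.1, by have := t.2; have := i.2; omega⟩) =
      g.submatrix (Fin.castLE hi) (Function.update (Fin.castLE hi) (Fin.last i) i) :=
    show _ = g.submatrix _ (Function.update _ _ (Fin.castLE hi (Fin.last i))) by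
      rw [Function.update_eq_self]; rfl
  have hNj : (Matrix.of fun s t : Fin ((i : ℕ) + 1) =>
      if (t : ℕ) = (i : ℕ) then g ⟨s.1, by have := s.2; have := i.2; omega⟩ j
      else g ⟨s.1, by have := s.2; have := i.2; omega⟩ ⟨t.1, by have := t.2; have := i.2; omega⟩) =
      g.submatrix (Fin.castLE hi) (Function.update (Fin.castLE hi) (Fin.last i) j) := by
    ext s t
    simp only [Matrix.of_apply, Matrix.submatrix_apply, Function.update_apply, Fin.ext_iff,
      Fin.val_last]
    exact (apply_ite (g _) _ _ _).symm
  have hA_det := hminor i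
  rw [hN, hminor_eq, hud, mul_one] at hA_det
  rw [hN, hNj, hminor_eq, hminor_eq, hud, mul_one]
  exact (mul_div_cancel_left₀ _ hA_det).symm
end

section
/- In an associative algebra with elements E_i, E_{i+1} satisfying KE relations of U_q(sl_n) and the quantum Serre relation E_i²E_{i+1} - (q+q^{-1})E_iE_{i+1}E_i + E_{i+1}E_i² = 0, together with invertible K_i, K_{i+1} with K_iE_j = q^{a_{ij}}E_jK_i (a_{ii}=2, a_{i,i+1}=a_{i+1,i}=-1), define 𝐄_i = q^{s_i}E_iK_i^{s_i} with s_{i+1} = s_i + 1. Then the modified Serre relations [𝐄_i, [𝐄_{i+1}, 𝐄_i]_𝔮] = 0 and [𝐄_{i+1}, [𝐄_{i+1}, 𝐄_i]_𝔮] = 0 hold, where 𝔮 = q² and [A,B]_𝔮 = AB - 𝔮^{-1}BA. -/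
/-!
Write the modified generators as `𝐄_i = E_i u` and `𝐄_{i+1} = E_{i+1} v` with
`u = q^s K_i^s` and `v = q^{s+1} K_{i+1}^{s+1}`; these commute with each other and `q`-commute
with `E_i, E_{i+1}`. Moving `u, v` to the right turns each cubic word in `𝐄_i, 𝐄_{i+1}` into a
scalar times the same word in `E_i, E_{i+1}`, followed by a word in `u, v`. Up to a common factor,
the scalars depend only on `β = q^{-s}` (from `u` passing `E_{i+1}`) and `γ = q^{-s-1}` (from `v`
passing `E_i`). Since `β = q γ`, which is where `s_{i+1} = s_i + 1` enters, the three words of each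
modified relation acquire the coefficients `1, -(q + q⁻¹), 1` of a quantum Serre relation.
-/

section TwistedCommutation

variable {K A : Type*} [Field K] [Ring A] [Algebra K A]

theorem pow_mul_eq_smul_mul_pow {u x : A} {c : K} (h : u * x = c • (x * u)) (n : ℕ) :
    u ^ n * x = c ^ n • (x * u ^ n) := by
  induction n with
  | zero => simp
  | succ n ih =>
    rw [pow_succ, mul_assoc, h, mul_smul_comm, ← mul_assoc, ih, smul_mul_assoc, smul_smul,
      mul_assoc, ← pow_succ, ← pow_succ']

theorem Units.inv_mul_eq_smul_mul_inv {u : Aˣ} {x : A} {c : K} (hc : c ≠ 0)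
    (h : (u : A) * x = c • (x * u)) : (↑u⁻¹ : A) * x = c⁻¹ • (x * ↑u⁻¹) := by
  rw [Units.inv_mul_eq_iff_eq_mul, mul_smul_comm, ← mul_assoc, h, smul_mul_assoc, smul_smul,
    inv_mul_cancel₀ hc, one_smul, mul_assoc, Units.mul_inv, mul_one]

theorem Units.zpow_mul_eq_smul_mul_zpow {u : Aˣ} {x : A} {c : K} (hc : c ≠ 0)
    (h : (u : A) * x = c • (x * u)) (n : ℤ) : (↑(u ^ n) : A) * x = c ^ n • (x * ↑(u ^ n)) := by
  cases n with
  | ofNat n => simpa using pow_mul_eq_smul_mul_pow h n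
  | negSucc n =>
    rw [zpow_negSucc, zpow_negSucc, ← inv_pow, ← inv_pow, Units.val_pow_eq_pow_val]
    exact pow_mul_eq_smul_mul_pow (Units.inv_mul_eq_smul_mul_inv hc h) (n + 1)

theorem mul_left_comm_of_mul_eq_smul {u x : A} {c : K} (h : u * x = c • (x * u)) (z : A) :
    u * (x * z) = c • (x * (u * z)) := by
  rw [← mul_assoc, h, smul_mul_assoc, mul_assoc]

theorem smul_mul_eq_smul_mul_smul {u x : A} {c : K} (h : u * x = c • (x * u)) (a : K) :
    (a • u) * x = c • (x * (a • u)) := by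
  rw [smul_mul_assoc, h, smul_comm, mul_smul_comm]

end TwistedCommutation

section ModifiedSerre

variable {K A : Type*} [Field K] [Ring A] [Algebra K A] {E E' u v : A} {α β γ δ q : K}

theorem commutator_qCommutator_left_eq (hq : q ≠ 0) (hβ : β = q * γ) (huv : Commute u v)
    (huE : u * E = α • (E * u)) (huE' : u * E' = β • (E' * u)) (hvE : v * E = γ • (E * v)) :
    E * u * (E' * v * (E * u) - (q ^ 2)⁻¹ • (E * u * (E' * v)))
        - (E' * v * (E * u) - (q ^ 2)⁻¹ • (E * u * (E' * v))) * (E * u)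
      = -(α * γ ^ 2) • ((E * E * E' - (q + q⁻¹) • (E * E' * E) + E' * E * E) * (u * u * v)) := by
  simp only [mul_assoc, mul_sub, sub_mul, add_mul, smul_mul_assoc, mul_smul_comm, smul_sub,
    smul_add, smul_smul, mul_left_comm_of_mul_eq_smul huE, mul_left_comm_of_mul_eq_smul huE',
    mul_left_comm_of_mul_eq_smul hvE, ← huv.eq]
  subst hβ
  match_scalars <;> grind

theorem commutator_qCommutator_right_eq (hq : q ≠ 0) (hβ : β = q * γ) (huv : Commute u v)
    (huE' : u * E' = β • (E' * u)) (hvE : v * E = γ • (E * v)) (hvE' : v * E' = δ • (E' * v)) :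
    E' * v * (E' * v * (E * u) - (q ^ 2)⁻¹ • (E * u * (E' * v)))
        - (E' * v * (E * u) - (q ^ 2)⁻¹ • (E * u * (E' * v))) * (E' * v)
      = (δ * γ ^ 2) • ((E' * E' * E - (q + q⁻¹) • (E' * E * E') + E * E' * E') * (u * v * v)) := by
  simp only [mul_assoc, mul_sub, sub_mul, add_mul, smul_mul_assoc, mul_smul_comm, smul_sub,
    smul_add, smul_smul, mul_left_comm_of_mul_eq_smul huE', mul_left_comm_of_mul_eq_smul hvE,
    mul_left_comm_of_mul_eq_smul hvE', huv.symm.left_comm, ← huv.eq]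
  subst hβ
  match_scalars <;> grind

end ModifiedSerre

theorem modified_serre_relations_general {A : Type*} [Ring A] [Algebra ℂ A]
    (q : ℂ) (hq0 : q ≠ 0)
    (E E' : A) (K K' : Aˣ)
    (hKE : (K : A) * E = q ^ 2 • (E * (K : A)))
    (hKE' : (K : A) * E' = q⁻¹ • (E' * (K : A)))
    (hK'E : (K' : A) * E = q⁻¹ • (E * (K' : A)))
    (hK'E' : (K' : A) * E' = q ^ 2 • (E' * (K' : A)))
    (hKK' : (K : A) * (K' : A) = (K' : A) * (K : A))
    (hserre1 : E * E * E' - (q + q⁻¹) • (E * E' * E) + E' * E * E = 0)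
    (hserre2 : E' * E' * E - (q + q⁻¹) • (E' * E * E') + E * E' * E' = 0)
    (s : ℤ) :
    (fun X Y : A => X * Y - Y * X)
        (q ^ s • (E * ((K ^ s : Aˣ) : A)))
        ((fun X Y : A => X * Y - (q ^ 2)⁻¹ • (Y * X))
          (q ^ (s + 1) • (E' * ((K' ^ (s + 1) : Aˣ) : A)))
          (q ^ s • (E * ((K ^ s : Aˣ) : A)))) = 0 ∧
    (fun X Y : A => X * Y - Y * X)
        (q ^ (s + 1) • (E' * ((K' ^ (s + 1) : Aˣ) : A)))
        ((fun X Y : A => X * Y - (q ^ 2)⁻¹ • (Y * X))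
          (q ^ (s + 1) • (E' * ((K' ^ (s + 1) : Aˣ) : A)))
          (q ^ s • (E * ((K ^ s : Aˣ) : A)))) = 0 := by
  rw [← mul_smul_comm, ← mul_smul_comm]
  beta_reduce
  have hq2 : q ^ 2 ≠ 0 := pow_ne_zero 2 hq0
  have hqinv : q⁻¹ ≠ 0 := inv_ne_zero hq0
  set u : A := q ^ s • ((K ^ s : Aˣ) : A)
  set v : A := q ^ (s + 1) • ((K' ^ (s + 1) : Aˣ) : A)
  have huE : u * E = (q ^ 2) ^ s • (E * u) :=
    smul_mul_eq_smul_mul_smul (Units.zpow_mul_eq_smul_mul_zpow hq2 hKE s) _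
  have huE' : u * E' = q⁻¹ ^ s • (E' * u) :=
    smul_mul_eq_smul_mul_smul (Units.zpow_mul_eq_smul_mul_zpow hqinv hKE' s) _
  have hvE : v * E = q⁻¹ ^ (s + 1) • (E * v) :=
    smul_mul_eq_smul_mul_smul (Units.zpow_mul_eq_smul_mul_zpow hqinv hK'E (s + 1)) _
  have hvE' : v * E' = (q ^ 2) ^ (s + 1) • (E' * v) :=
    smul_mul_eq_smul_mul_smul (Units.zpow_mul_eq_smul_mul_zpow hq2 hK'E' (s + 1)) _
  have hKsK's : Commute ((K ^ s : Aˣ) : A) ((K' ^ (s + 1) : Aˣ) : A) :=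
    ((show Commute (K : A) K' from hKK').units_zpow_left s).units_zpow_right (s + 1)
  have huv : Commute u v := (hKsK's.smul_left _).smul_right _
  have hβ : q⁻¹ ^ s = q * q⁻¹ ^ (s + 1) := by
    rw [zpow_add_one₀ hqinv]
    field_simp
  constructor
  · rw [commutator_qCommutator_left_eq hq0 hβ huv huE huE' hvE, hserre1, zero_mul, smul_zero]
  · rw [commutator_qCommutator_right_eq hq0 hβ huv huE' hvE hvE', hserre2, zero_mul, smul_zero]

/-- In an associative unital ℂ-algebra with `E_i, E_{i+1}` and invertible `K_i, K_{i+1}`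
satisfying the `U_q(sl_n)` K-E relations and both quantum Serre relations, the modified
generators `𝐄_i = q^{s_i} E_i K_i^{s_i}` with `s_{i+1} = s_i + 1` satisfy the modified
Serre relations `[𝐄_i, [𝐄_{i+1}, 𝐄_i]_𝔮] = 0 = [𝐄_{i+1}, [𝐄_{i+1}, 𝐄_i]_𝔮]`,
where `𝔮 = q²` and `[A,B]_𝔮 = AB - 𝔮⁻¹BA`. -/
theorem modified_serre_relations {A : Type*} [Ring A] [Algebra ℂ A]
    (q : ℂ) (hq0 : q ≠ 0) (hq1 : q ^ 2 ≠ 1)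
    (E E' : A) (K K' : Aˣ)
    (hKE : (K : A) * E = q ^ 2 • (E * (K : A)))
    (hKE' : (K : A) * E' = q⁻¹ • (E' * (K : A)))
    (hK'E : (K' : A) * E = q⁻¹ • (E * (K' : A)))
    (hK'E' : (K' : A) * E' = q ^ 2 • (E' * (K' : A)))
    (hKK' : (K : A) * (K' : A) = (K' : A) * (K : A))
    (hserre1 : E * E * E' - (q + q⁻¹) • (E * E' * E) + E' * E * E = 0)
    (hserre2 : E' * E' * E - (q + q⁻¹) • (E' * E * E') + E * E' * E' = 0)
    (s : ℤ) :
    (fun X Y : A => X * Y - Y * X)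
        (q ^ s • (E * ((K ^ s : Aˣ) : A)))
        ((fun X Y : A => X * Y - (q ^ 2)⁻¹ • (Y * X))
          (q ^ (s + 1) • (E' * ((K' ^ (s + 1) : Aˣ) : A)))
          (q ^ s • (E * ((K ^ s : Aˣ) : A)))) = 0 ∧
    (fun X Y : A => X * Y - Y * X)
        (q ^ (s + 1) • (E' * ((K' ^ (s + 1) : Aˣ) : A)))
        ((fun X Y : A => X * Y - (q ^ 2)⁻¹ • (Y * X))
          (q ^ (s + 1) • (E' * ((K' ^ (s + 1) : Aˣ) : A)))
          (q ^ s • (E * ((K ^ s : Aˣ) : A)))) = 0 :=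
  modified_serre_relations_general q hq0 E E' K K' hKE hKE' hK'E hK'E' hKK' hserre1 hserre2 s
end

section
/- For the classical principal series shift-operator action of sl(n): with E_i acting by E_i·f(u) = Σ_{k=1}^{n-i} (1 + Σ_{j=k}^{n-i} u_{j,i+j}) f(…shifts…), F_i by the analogous formula, and H_i acting by multiplication by h_i(u) = Σ_{j=1}^{i-1} u_{ji} - Σ_{j=i+1}^{n} u_{ij} - Σ_{j=1}^{n-i} u_{j,i+j} + 2λ_i, the commutators satisfy [H_i, E_j] = a_{ij} E_j and [H_i, F_j] = -a_{ij} F_j, where a_{ij} is the Cartan matrix of type A_{n-1}. -/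
/-!
Since `h_i` is affine in `u`, multiplying by it commutes with a shift `u ↦ u + e` up to the
constant `h_i(u + e) - h_i(u) = ℓ_i(e)`, where `ℓ_i = Hcoef n i 0` is the linear part of `h_i`.
Hence `[H_i, E_j]` and `[H_i, F_j]` multiply the `k`-th summand of `E_j`, `F_j` by `-ℓ_i` of its
shift vector, and it remains to see that this is `a_{ij}`, resp. `-a_{ij}`, for every `k`.
On a unit vector `e_{p,q}`, `ℓ_i` equals `δ_{q,i} - δ_{p,i} - δ_{q,p+i}`; the four terms of a shift
vector cancel in pairs down to `∓(2δ_{ij} - δ_{i+1,j} - δ_{j+1,i}) = ∓a_{ij}`.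
-/

noncomputable section
open Finset

/-- The variable `u_{p,q}`, with the convention that `u_{p,q} = 0` unless
`1 ≤ p < q ≤ n` (in particular `u_{0,j} = u_{k,k} = 0`). -/
def mval (n : ℕ) (u : ℕ × ℕ → ℂ) (p q : ℕ) : ℂ :=
  if 1 ≤ p ∧ p < q ∧ q ≤ n then u (p, q) else 0

/-- The unit shift vector in the coordinate `u_{p,q}`; it vanishes (the shift is
non-existent) unless `1 ≤ p < q ≤ n`. -/
def uvec (n : ℕ) (p q : ℕ) : ℕ × ℕ → ℂ :=
  fun x => if x = (p, q) ∧ 1 ≤ p ∧ p < q ∧ q ≤ n then 1 else 0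

/-- The shift vector `e_{E_i}^k`: shifts `u_{k-1,i+k-1}` by `+1`, `u_{k-1,i+k}` by `-1`,
`u_{k,i+k-1}` by `-1`, `u_{k,i+k}` by `+1`. -/
def eShift (n i k : ℕ) : ℕ × ℕ → ℂ :=
  uvec n (k - 1) (i + k - 1) - uvec n (k - 1) (i + k) - uvec n k (i + k - 1) + uvec n k (i + k)

/-- The shift vector `e_{F_i}^k`: shifts `u_{k-1,i-1}` by `-1`, `u_{k-1,i}` by `+1`,
`u_{k,i}` by `+1`, `u_{k,i+1}` by `-1`. -/
def fShift (n i k : ℕ) : ℕ × ℕ → ℂ :=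
  uvec n (k - 1) i + uvec n k i - uvec n (k - 1) (i - 1) - uvec n k (i + 1)

/-- The coefficient `E_i^k(u) = 1 + Σ_{j=k}^{n-i} u_{j,i+j}`. -/
def Ecoef (n i k : ℕ) (u : ℕ × ℕ → ℂ) : ℂ :=
  1 + ∑ j ∈ Icc k (n - i), mval n u j (i + j)

/-- The coefficient `F_i^k(u) = 1 + Σ_{j=k}^{i} u_{j,i} - Σ_{j=i+1}^{n} u_{i,j} + 2λ_i`. -/
def Fcoef (n i k : ℕ) (lam : ℂ) (u : ℕ × ℕ → ℂ) : ℂ :=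
  1 + ∑ j ∈ Icc k i, mval n u j i - ∑ j ∈ Icc (i + 1) n, mval n u i j + 2 * lam

/-- The coefficient
`h_i(u) = Σ_{j=1}^{i-1} u_{j,i} - Σ_{j=i+1}^{n} u_{i,j} - Σ_{j=1}^{n-i} u_{j,i+j} + 2λ_i`. -/
def Hcoef (n i : ℕ) (lam : ℂ) (u : ℕ × ℕ → ℂ) : ℂ :=
  ∑ j ∈ Icc 1 (i - 1), mval n u j i - ∑ j ∈ Icc (i + 1) n, mval n u i j
    - ∑ j ∈ Icc 1 (n - i), mval n u j (i + j) + 2 * lam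

/-- The shift operator `E_i·f(u) = Σ_{k=1}^{n-i} E_i^k(u) f(u + e_{E_i}^k)`. -/
def Eop (n i : ℕ) (f : (ℕ × ℕ → ℂ) → ℂ) : (ℕ × ℕ → ℂ) → ℂ :=
  fun u => ∑ k ∈ Icc 1 (n - i), Ecoef n i k u * f (u + eShift n i k)

/-- The shift operator `F_i·f(u) = Σ_{k=1}^{i} F_i^k(u) f(u + e_{F_i}^k)`. -/
def Fop (n i : ℕ) (lam : ℂ) (f : (ℕ × ℕ → ℂ) → ℂ) : (ℕ × ℕ → ℂ) → ℂ :=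
  fun u => ∑ k ∈ Icc 1 i, Fcoef n i k lam u * f (u + fShift n i k)

/-- The multiplication operator `H_i·f(u) = h_i(u) f(u)`. -/
def Hop (n i : ℕ) (lam : ℂ) (f : (ℕ × ℕ → ℂ) → ℂ) : (ℕ × ℕ → ℂ) → ℂ :=
  fun u => Hcoef n i lam u * f u

/-- The Cartan matrix of type `A_{n-1}`. -/
def cartan (i j : ℕ) : ℂ :=
  if i = j then 2 else if i + 1 = j ∨ j + 1 = i then -1 else 0

theorem mval_add (n : ℕ) (u v : ℕ × ℕ → ℂ) (p q : ℕ) :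
    mval n (u + v) p q = mval n u p q + mval n v p q := by
  unfold mval; split_ifs <;> simp

theorem mval_sub (n : ℕ) (u v : ℕ × ℕ → ℂ) (p q : ℕ) :
    mval n (u - v) p q = mval n u p q - mval n v p q := by
  unfold mval; split_ifs <;> simp

theorem Hcoef_add (n i : ℕ) (lam : ℂ) (u v : ℕ × ℕ → ℂ) :
    Hcoef n i lam (u + v) = Hcoef n i lam u + Hcoef n i 0 v := by
  simp only [Hcoef, mval_add, sum_add_distrib]; ring

theorem Hcoef_zero_sub (n i : ℕ) (u v : ℕ × ℕ → ℂ) :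
    Hcoef n i 0 (u - v) = Hcoef n i 0 u - Hcoef n i 0 v := by
  simp only [Hcoef, mval_sub, sum_sub_distrib]; ring

/-- The formula also holds, with value `0`, for the non-existent coordinates `p = 0` and `p = q`;
this is what makes the boundary summands `k = 1`, `j = 1` of `E_j` and `F_j` behave like the others. -/
theorem Hcoef_zero_uvec {n i p q : ℕ} (hi : 1 ≤ i) (hpq : p ≤ q) (hqn : q ≤ n) :
    Hcoef n i 0 (uvec n p q) =
      (if q = i then 1 else 0) - (if p = i then 1 else 0) - (if q = p + i then 1 else 0) := by
  rcases (show (1 ≤ p ∧ p < q) ∨ (p = 0 ∨ p = q) by omega) with hvalid | hdegenerate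
  · have hm : ∀ a b, mval n (uvec n p q) a b = if a = p ∧ b = q then 1 else 0 := by
      intro a b
      simp only [mval, uvec, Prod.mk.injEq]
      split_ifs <;> first | rfl | omega
    simp only [Hcoef, hm, ite_and, sum_ite_eq', sum_ite_irrel, sum_const_zero, mem_Icc, hvalid.1,
      hqn, if_true, mul_zero, add_zero]
    split_ifs <;> first | omega | norm_num
  · have hzero : uvec n p q = 0 := by
      funext x
      exact if_neg (by omega)
    simp only [hzero, Hcoef, mval, Pi.zero_apply, ite_self, sum_const_zero]
    rcases hdegenerate with rfl | rfl <;> simp <;> omega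

theorem cartan_eq_ite (i j : ℕ) :
    cartan i j = 2 * (if i = j then 1 else 0) - (if i + 1 = j then 1 else 0)
      - (if j + 1 = i then 1 else 0) := by
  unfold cartan
  split_ifs <;> first | omega | norm_num

theorem Hcoef_zero_eShift {n i j k : ℕ} (hi : 1 ≤ i) (hj : 1 ≤ j) (hk : 1 ≤ k) (hjk : j + k ≤ n) :
    Hcoef n i 0 (eShift n j k) = -cartan i j := by
  rw [eShift, Hcoef_add, Hcoef_zero_sub, Hcoef_zero_sub, Hcoef_zero_uvec hi (by omega) (by omega),
    Hcoef_zero_uvec hi (by omega) (by omega), Hcoef_zero_uvec hi (by omega) (by omega),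
    Hcoef_zero_uvec hi (by omega) hjk, cartan_eq_ite]
  simp only [show j + k - 1 = k - 1 + i ↔ i = j by omega, show j + k = k - 1 + i ↔ j + 1 = i by omega,
    show j + k - 1 = k + i ↔ i + 1 = j by omega, show j + k = k + i ↔ i = j by omega]
  ring

theorem Hcoef_zero_fShift {n i j k : ℕ} (hi : 1 ≤ i) (hk : 1 ≤ k) (hkj : k ≤ j) (hjn : j + 1 ≤ n) :
    Hcoef n i 0 (fShift n j k) = cartan i j := by
  rw [fShift, Hcoef_zero_sub, Hcoef_zero_sub, Hcoef_add, Hcoef_zero_uvec hi (by omega) (by omega),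
    Hcoef_zero_uvec hi hkj (by omega), Hcoef_zero_uvec hi (by omega) (by omega),
    Hcoef_zero_uvec hi (by omega) hjn, cartan_eq_ite]
  simp only [show j + 1 = k + i ↔ j = k - 1 + i by omega, show j - 1 = k - 1 + i ↔ j = k + i by omega,
    show j - 1 = i ↔ i + 1 = j by omega, show j = i ↔ i = j from eq_comm]
  ring

def shiftSum (s : Finset ℕ) (c : ℕ → (ℕ × ℕ → ℂ) → ℂ) (e : ℕ → ℕ × ℕ → ℂ)
    (f : (ℕ × ℕ → ℂ) → ℂ) (u : ℕ × ℕ → ℂ) : ℂ :=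
  ∑ k ∈ s, c k u * f (u + e k)

theorem Hop_shiftSum_sub_shiftSum_Hop {n i : ℕ} {lam a : ℂ} {s : Finset ℕ} {e : ℕ → ℕ × ℕ → ℂ}
    (he : ∀ k ∈ s, Hcoef n i 0 (e k) = -a) (c : ℕ → (ℕ × ℕ → ℂ) → ℂ)
    (f : (ℕ × ℕ → ℂ) → ℂ) (u : ℕ × ℕ → ℂ) :
    Hop n i lam (shiftSum s c e f) u - shiftSum s c e (Hop n i lam f) u
      = a * shiftSum s c e f u := by
  simp only [Hop, shiftSum, mul_sum, ← sum_sub_distrib]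
  refine sum_congr rfl fun k hk => ?_
  rw [Hcoef_add, he k hk]
  ring

theorem H_E_F_commutators_general (n i j : ℕ)
    (hi : 1 ≤ i) (hj : 1 ≤ j) (hj' : j ≤ n - 1)
    (lam : ℕ → ℂ) (f : (ℕ × ℕ → ℂ) → ℂ) (u : ℕ × ℕ → ℂ) :
    Hop n i (lam i) (Eop n j f) u - Eop n j (Hop n i (lam i) f) u
        = cartan i j * Eop n j f u ∧
    Hop n i (lam i) (Fop n j (lam j) f) u - Fop n j (lam j) (Hop n i (lam i) f) u
        = - cartan i j * Fop n j (lam j) f u := by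
  constructor
  · refine Hop_shiftSum_sub_shiftSum_Hop (fun k hk => ?_) (Ecoef n j) f u
    rw [mem_Icc] at hk
    exact Hcoef_zero_eShift hi hj hk.1 (by omega)
  · refine Hop_shiftSum_sub_shiftSum_Hop (fun k hk => ?_) (fun k => Fcoef n j k (lam j)) f u
    rw [mem_Icc] at hk
    rw [neg_neg]
    exact Hcoef_zero_fShift hi hk.1 hk.2 (by omega)

/-- `[H_i, E_j] = a_{ij} E_j` and `[H_i, F_j] = -a_{ij} F_j` for the classical
principal series shift-operator action of `sl(n)`. -/
theorem H_E_F_commutators (n i j : ℕ) (hn : 2 ≤ n)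
    (hi : 1 ≤ i) (hi' : i ≤ n - 1) (hj : 1 ≤ j) (hj' : j ≤ n - 1)
    (lam : ℕ → ℂ) (f : (ℕ × ℕ → ℂ) → ℂ) (u : ℕ × ℕ → ℂ) :
    Hop n i (lam i) (Eop n j f) u - Eop n j (Hop n i (lam i) f) u
        = cartan i j * Eop n j f u ∧
    Hop n i (lam i) (Fop n j (lam j) f) u - Fop n j (lam j) (Hop n i (lam i) f) u
        = - cartan i j * Fop n j (lam j) f u :=
  H_E_F_commutators_general n i j hi hj hj' lam f u
end
end

section
/- For the classical principal series shift-operator action of sl(n), the Serre relations E_i²E_{i+1} - 2E_iE_{i+1}E_i + E_{i+1}E_i² = 0 and E_{i+1}²E_i - 2E_{i+1}E_iE_{i+1} + E_iE_{i+1}² = 0 hold, and similarly for the F_i. -/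
/-! The operators `E_i`, `F_i` have the shape `A f u = ∑ k ∈ s, a k u * f (u + S k)`, and the
coefficients of `E_i, E_{i+1}` (resp. `F_i, F_{i+1}`) change by constants, depending only on the
indices, under each other's shifts. Hence each term of a Serre combination is a sum over `k, l`
(indices of the doubled operator) and `m` of explicit coefficients times `f (u + S k + S l + T m)`,
and a few identities between indicator functions make the combined coefficient antisymmetric in
`k, l`, so the whole sum vanishes. -/

noncomputable section
open Finset

theorem sum_sum_eq_zero_of_add_swap_eq_zero {ι M : Type*} [AddCommMonoid M] [IsAddTorsionFree M]
    (s : Finset ι) (G : ι → ι → M) (h : ∀ k ∈ s, ∀ l ∈ s, G k l + G l k = 0) :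
    ∑ k ∈ s, ∑ l ∈ s, G k l = 0 := by
  rw [← two_nsmul_eq_zero, two_nsmul]
  nth_rewrite 2 [sum_comm]
  simp only [← sum_add_distrib]
  exact sum_eq_zero fun k hk => sum_eq_zero fun l hl => h k hk l hl

section ShiftOperator

variable {ι V R : Type*} [AddCommMonoid V] [CommRing R]

def shiftOp (s : Finset ι) (c : ι → V → R) (S : ι → V) (f : V → R) : V → R :=
  fun u => ∑ k ∈ s, c k u * f (u + S k)

/-- Identities between the increments of the coefficients in `shiftOp_serre` which make the
Serre combination antisymmetric in the two indices of the doubled operator. -/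
def SerreCompatible (σ π ρ : ι → ι → R) : Prop :=
  ∀ l k m, σ l k * (ρ m k - ρ m l) = 2 * π l m * ρ m k ∧
    π k m * σ l k + π l m * σ k l = 2 * (π l m * π k m)

theorem shiftOp_serre [IsAddTorsionFree R] (s t : Finset ι) (a b : ι → V → R) (S T : ι → V)
    (σ π ρ : ι → ι → R)
    (haS : ∀ l ∈ s, ∀ k ∈ s, ∀ u, a l (u + S k) = a l u + σ l k)
    (haT : ∀ l ∈ s, ∀ m ∈ t, ∀ u, a l (u + T m) = a l u - π l m)
    (hbS : ∀ m ∈ t, ∀ k ∈ s, ∀ u, b m (u + S k) = b m u - ρ m k)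
    (hw : SerreCompatible σ π ρ) (f : V → R) (u : V) :
    shiftOp s a S (shiftOp s a S (shiftOp t b T f)) u
      - 2 * shiftOp s a S (shiftOp t b T (shiftOp s a S f)) u
      + shiftOp t b T (shiftOp s a S (shiftOp s a S f)) u = 0 := by
  have expand : shiftOp s a S (shiftOp s a S (shiftOp t b T f)) u
      - 2 * shiftOp s a S (shiftOp t b T (shiftOp s a S f)) u
      + shiftOp t b T (shiftOp s a S (shiftOp s a S f)) u
      = ∑ k ∈ s, ∑ l ∈ s, ∑ m ∈ t,
          (a k u * a l (u + S k) * b m (u + S k + S l)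
            - 2 * a k u * b m (u + S k) * a l (u + S k + T m)
            + b m u * a k (u + T m) * a l (u + S k + T m)) * f (u + S k + S l + T m) := by
    simp only [shiftOp, mul_sum]
    rw [sum_comm (s := t)]
    simp only [← sum_sub_distrib, ← sum_add_distrib]
    refine sum_congr rfl fun k _ => ?_
    rw [sum_comm (s := t), sum_comm (s := t)]
    simp only [← sum_sub_distrib, ← sum_add_distrib]
    refine sum_congr rfl fun l _ => sum_congr rfl fun m _ => ?_
    rw [add_right_comm u (T m) (S k), add_right_comm (u + S k) (T m) (S l)]
    ring
  rw [expand]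
  refine sum_sum_eq_zero_of_add_swap_eq_zero s _ fun k hk l hl => ?_
  rw [← sum_add_distrib]
  refine sum_eq_zero fun m hm => ?_
  obtain ⟨hσρ, hσπ⟩ := hw l k m
  obtain ⟨hσρ', -⟩ := hw k l m
  simp only [haS k hk l hl, haS l hl k hk, haT k hk m hm, haT l hl m hm, hbS m hm k hk,
    hbS m hm l hl, add_right_comm u (S l) (S k)]
  linear_combination (a k u * f (u + S k + S l + T m)) * hσρ
    + (a l u * f (u + S k + S l + T m)) * hσρ' - (b m u * f (u + S k + S l + T m)) * hσπ

end ShiftOperator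

theorem mval_uvec (n p q r s : ℕ) :
    mval n (uvec n p q) r s = if r = p ∧ s = q ∧ 1 ≤ p ∧ p < q ∧ q ≤ n then 1 else 0 := by
  unfold mval uvec
  split_ifs <;> simp_all

theorem sum_mval_uvec_fst (n A B p q : ℕ) (g : ℕ → ℕ) :
    ∑ j ∈ Icc A B, mval n (uvec n p q) j (g j)
      = if A ≤ p ∧ p ≤ B ∧ g p = q ∧ 1 ≤ p ∧ p < q ∧ q ≤ n then 1 else 0 := by
  simp only [mval_uvec, ite_and, sum_ite_eq', mem_Icc]

theorem sum_mval_uvec_snd (n A B c p q : ℕ) :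
    ∑ j ∈ Icc A B, mval n (uvec n p q) c j
      = if A ≤ q ∧ q ≤ B ∧ c = p ∧ 1 ≤ p ∧ p < q ∧ q ≤ n then 1 else 0 := by
  by_cases hc : c = p
  · simp only [mval_uvec, hc, true_and, ite_and, sum_ite_eq', mem_Icc]
  · simp [mval_uvec, hc]

theorem Ecoef_add (n i l : ℕ) (u w : ℕ × ℕ → ℂ) :
    Ecoef n i l (u + w) = Ecoef n i l u + ∑ j ∈ Icc l (n - i), mval n w j (i + j) := by
  simp only [Ecoef, mval_add, sum_add_distrib]; ring

theorem Fcoef_add (n i l : ℕ) (lam : ℂ) (u w : ℕ × ℕ → ℂ) :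
    Fcoef n i l lam (u + w) = Fcoef n i l lam u
      + (∑ j ∈ Icc l i, mval n w j i - ∑ j ∈ Icc (i + 1) n, mval n w i j) := by
  simp only [Fcoef, mval_add, sum_add_distrib]; ring

theorem Ecoef_add_eShift {n i l k : ℕ} (hi : 1 ≤ i) (hl : 1 ≤ l) (hk : k ∈ Icc 1 (n - i))
    (u : ℕ × ℕ → ℂ) :
    Ecoef n i l (u + eShift n i k)
      = Ecoef n i l u + ((if l < k then 1 else 0) + (if l ≤ k then 1 else 0)) := by
  rw [mem_Icc] at hk
  rw [Ecoef_add]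
  congr 1
  simp only [eShift, mval_add, mval_sub, sum_add_distrib, sum_sub_distrib, sum_mval_uvec_fst,
    true_and]
  split_ifs <;> first | omega | norm_num

theorem Ecoef_succ_add_eShift {n i m k : ℕ} (hm : 1 ≤ m) (hk : k ∈ Icc 1 (n - i))
    (u : ℕ × ℕ → ℂ) :
    Ecoef n (i + 1) m (u + eShift n i k) = Ecoef n (i + 1) m u - if m < k then 1 else 0 := by
  rw [mem_Icc] at hk
  rw [Ecoef_add, sub_eq_add_neg]
  congr 1
  simp only [eShift, mval_add, mval_sub, sum_add_distrib, sum_sub_distrib, sum_mval_uvec_fst]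
  split_ifs <;> first | omega | norm_num

theorem Ecoef_add_eShift_succ {n i l m : ℕ} (hi : 1 ≤ i) (hm : m ∈ Icc 1 (n - (i + 1)))
    (u : ℕ × ℕ → ℂ) :
    Ecoef n i l (u + eShift n (i + 1) m) = Ecoef n i l u - if l ≤ m then 1 else 0 := by
  rw [mem_Icc] at hm
  rw [Ecoef_add, sub_eq_add_neg]
  congr 1
  simp only [eShift, mval_add, mval_sub, sum_add_distrib, sum_sub_distrib, sum_mval_uvec_fst]
  split_ifs <;> first | omega | norm_num

theorem Fcoef_add_fShift {n i l k : ℕ} (hn : i + 1 ≤ n) (hl : l ∈ Icc 1 i) (hk : k ∈ Icc 1 i)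
    (lam : ℂ) (u : ℕ × ℕ → ℂ) :
    Fcoef n i l lam (u + fShift n i k)
      = Fcoef n i l lam u + ((if l < k then 1 else 0) + (if l ≤ k then 1 else 0)) := by
  rw [mem_Icc] at hl hk
  have hcol : ∑ j ∈ Icc l i, mval n (fShift n i k) j i
      = (if l < k then 1 else 0) + (if l ≤ k ∧ k < i then 1 else 0) := by
    simp only [fShift, mval_add, mval_sub, sum_add_distrib, sum_sub_distrib, sum_mval_uvec_fst,
      true_and]
    split_ifs <;> first | omega | norm_num
  have hrow : ∑ j ∈ Icc (i + 1) n, mval n (fShift n i k) i j = -(if k = i then 1 else 0) := by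
    simp only [fShift, mval_add, mval_sub, sum_add_distrib, sum_sub_distrib, sum_mval_uvec_snd]
    split_ifs <;> first | omega | norm_num
  rw [Fcoef_add, hcol, hrow]
  split_ifs <;> first | omega | ring

theorem Fcoef_succ_add_fShift {n i m k : ℕ} (hn : i + 1 ≤ n) (hk : k ∈ Icc 1 i)
    (lam : ℂ) (u : ℕ × ℕ → ℂ) :
    Fcoef n (i + 1) m lam (u + fShift n i k)
      = Fcoef n (i + 1) m lam u - if m ≤ k then 1 else 0 := by
  rw [mem_Icc] at hk
  have hcol : ∑ j ∈ Icc m (i + 1), mval n (fShift n i k) j (i + 1)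
      = -(if m ≤ k then 1 else 0) := by
    simp only [fShift, mval_add, mval_sub, sum_add_distrib, sum_sub_distrib, sum_mval_uvec_fst,
      true_and]
    split_ifs <;> first | omega | norm_num
  have hrow : ∑ j ∈ Icc (i + 1 + 1) n, mval n (fShift n i k) (i + 1) j = 0 := by
    simp only [fShift, mval_add, mval_sub, sum_add_distrib, sum_sub_distrib, sum_mval_uvec_snd]
    split_ifs <;> first | omega | norm_num
  rw [Fcoef_add, hcol, hrow]
  ring

theorem Fcoef_add_fShift_succ {n i l m : ℕ} (hn : i + 2 ≤ n) (hl : l ∈ Icc 1 i)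
    (hm : m ∈ Icc 1 (i + 1)) (lam : ℂ) (u : ℕ × ℕ → ℂ) :
    Fcoef n i l lam (u + fShift n (i + 1) m) = Fcoef n i l lam u - if l < m then 1 else 0 := by
  rw [mem_Icc] at hl hm
  have hcol : ∑ j ∈ Icc l i, mval n (fShift n (i + 1) m) j i
      = -(if l < m ∧ m ≤ i then 1 else 0) := by
    simp only [fShift, mval_add, mval_sub, sum_add_distrib, sum_sub_distrib, sum_mval_uvec_fst]
    split_ifs <;> first | omega | norm_num
  have hrow : ∑ j ∈ Icc (i + 1) n, mval n (fShift n (i + 1) m) i j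
      = if m = i + 1 then 1 else 0 := by
    simp only [fShift, mval_add, mval_sub, sum_add_distrib, sum_sub_distrib, sum_mval_uvec_snd]
    split_ifs <;> first | omega | norm_num
  rw [Fcoef_add, hcol, hrow]
  split_ifs <;> first | omega | ring

theorem serreCompatible_le_lt :
    SerreCompatible (fun l k : ℕ => (if l < k then (1 : ℂ) else 0) + if l ≤ k then 1 else 0)
      (fun l m => if l ≤ m then 1 else 0) (fun m k => if m < k then 1 else 0) := by
  refine fun l k m => ⟨?_, ?_⟩ <;> dsimp only <;> split_ifs <;> first | omega | norm_num

theorem serreCompatible_lt_le :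
    SerreCompatible (fun l k : ℕ => (if l < k then (1 : ℂ) else 0) + if l ≤ k then 1 else 0)
      (fun l m => if l < m then 1 else 0) (fun m k => if m ≤ k then 1 else 0) := by
  refine fun l k m => ⟨?_, ?_⟩ <;> dsimp only <;> split_ifs <;> first | omega | norm_num

theorem Eop_eq_shiftOp (n i : ℕ) : Eop n i = shiftOp (Icc 1 (n - i)) (Ecoef n i) (eShift n i) :=
  rfl

theorem Fop_eq_shiftOp (n i : ℕ) (lam : ℂ) :
    Fop n i lam = shiftOp (Icc 1 i) (fun k => Fcoef n i k lam) (fShift n i) :=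
  rfl

theorem Eop_serre {n i : ℕ} (hi : 1 ≤ i) (f : (ℕ × ℕ → ℂ) → ℂ) (u : ℕ × ℕ → ℂ) :
    Eop n i (Eop n i (Eop n (i + 1) f)) u - 2 * Eop n i (Eop n (i + 1) (Eop n i f)) u
      + Eop n (i + 1) (Eop n i (Eop n i f)) u = 0 := by
  simp only [Eop_eq_shiftOp]
  exact shiftOp_serre _ _ _ _ _ _ _ _ _
    (fun l hl k hk => Ecoef_add_eShift hi (mem_Icc.1 hl).1 hk)
    (fun _ _ m hm => Ecoef_add_eShift_succ hi hm)
    (fun m hm k hk => Ecoef_succ_add_eShift (mem_Icc.1 hm).1 hk)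
    serreCompatible_le_lt f u

theorem Eop_succ_serre {n i : ℕ} (hi : 1 ≤ i) (f : (ℕ × ℕ → ℂ) → ℂ) (u : ℕ × ℕ → ℂ) :
    Eop n (i + 1) (Eop n (i + 1) (Eop n i f)) u - 2 * Eop n (i + 1) (Eop n i (Eop n (i + 1) f)) u
      + Eop n i (Eop n (i + 1) (Eop n (i + 1) f)) u = 0 := by
  simp only [Eop_eq_shiftOp]
  exact shiftOp_serre _ _ _ _ _ _ _ _ _
    (fun l hl k hk => Ecoef_add_eShift (Nat.le_add_left 1 i) (mem_Icc.1 hl).1 hk)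
    (fun l hl m hm => Ecoef_succ_add_eShift (mem_Icc.1 hl).1 hm)
    (fun _ _ k hk => Ecoef_add_eShift_succ hi hk)
    serreCompatible_lt_le f u

theorem Fop_serre {n i : ℕ} (hn : i + 2 ≤ n) (lam lam' : ℂ) (f : (ℕ × ℕ → ℂ) → ℂ)
    (u : ℕ × ℕ → ℂ) :
    Fop n i lam (Fop n i lam (Fop n (i + 1) lam' f)) u
      - 2 * Fop n i lam (Fop n (i + 1) lam' (Fop n i lam f)) u
      + Fop n (i + 1) lam' (Fop n i lam (Fop n i lam f)) u = 0 := by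
  simp only [Fop_eq_shiftOp]
  exact shiftOp_serre _ _ _ _ _ _ _ _ _
    (fun l hl k hk => Fcoef_add_fShift (by omega) hl hk lam)
    (fun l hl m hm => Fcoef_add_fShift_succ hn hl hm lam)
    (fun _ _ k hk => Fcoef_succ_add_fShift (by omega) hk lam') serreCompatible_lt_le f u

theorem Fop_succ_serre {n i : ℕ} (hn : i + 2 ≤ n) (lam lam' : ℂ) (f : (ℕ × ℕ → ℂ) → ℂ)
    (u : ℕ × ℕ → ℂ) :
    Fop n (i + 1) lam' (Fop n (i + 1) lam' (Fop n i lam f)) u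
      - 2 * Fop n (i + 1) lam' (Fop n i lam (Fop n (i + 1) lam' f)) u
      + Fop n i lam (Fop n (i + 1) lam' (Fop n (i + 1) lam' f)) u = 0 := by
  simp only [Fop_eq_shiftOp]
  exact shiftOp_serre _ _ _ _ _ _ _ _ _
    (fun l hl k hk => Fcoef_add_fShift hn hl hk lam')
    (fun _ _ m hm => Fcoef_succ_add_fShift (by omega) hm lam')
    (fun m hm k hk => Fcoef_add_fShift_succ hn hm hk lam) serreCompatible_le_lt f u

theorem serre_relations_general (n i : ℕ)
    (hi : 1 ≤ i) (hi' : i + 1 ≤ n - 1)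
    (lam : ℕ → ℂ) (f : (ℕ × ℕ → ℂ) → ℂ) (u : ℕ × ℕ → ℂ) :
    Eop n i (Eop n i (Eop n (i + 1) f)) u
        - 2 * Eop n i (Eop n (i + 1) (Eop n i f)) u
        + Eop n (i + 1) (Eop n i (Eop n i f)) u = 0 ∧
    Eop n (i + 1) (Eop n (i + 1) (Eop n i f)) u
        - 2 * Eop n (i + 1) (Eop n i (Eop n (i + 1) f)) u
        + Eop n i (Eop n (i + 1) (Eop n (i + 1) f)) u = 0 ∧
    Fop n i (lam i) (Fop n i (lam i) (Fop n (i + 1) (lam (i + 1)) f)) u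
        - 2 * Fop n i (lam i) (Fop n (i + 1) (lam (i + 1)) (Fop n i (lam i) f)) u
        + Fop n (i + 1) (lam (i + 1)) (Fop n i (lam i) (Fop n i (lam i) f)) u = 0 ∧
    Fop n (i + 1) (lam (i + 1)) (Fop n (i + 1) (lam (i + 1)) (Fop n i (lam i) f)) u
        - 2 * Fop n (i + 1) (lam (i + 1)) (Fop n i (lam i) (Fop n (i + 1) (lam (i + 1)) f)) u
        + Fop n i (lam i) (Fop n (i + 1) (lam (i + 1)) (Fop n (i + 1) (lam (i + 1)) f)) u = 0 := by
  have hn : i + 2 ≤ n := by omega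
  exact ⟨Eop_serre hi f u, Eop_succ_serre hi f u, Fop_serre hn (lam i) (lam (i + 1)) f u,
    Fop_succ_serre hn (lam i) (lam (i + 1)) f u⟩

/-- The Serre relations `E_i²E_{i+1} - 2E_iE_{i+1}E_i + E_{i+1}E_i² = 0` and
`E_{i+1}²E_i - 2E_{i+1}E_iE_{i+1} + E_iE_{i+1}² = 0` hold for the classical principal
series shift-operator action of `sl(n)`, and similarly for the `F_i`. -/
theorem serre_relations (n i : ℕ) (hn : 2 ≤ n)
    (hi : 1 ≤ i) (hi' : i + 1 ≤ n - 1)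
    (lam : ℕ → ℂ) (f : (ℕ × ℕ → ℂ) → ℂ) (u : ℕ × ℕ → ℂ) :
    Eop n i (Eop n i (Eop n (i + 1) f)) u
        - 2 * Eop n i (Eop n (i + 1) (Eop n i f)) u
        + Eop n (i + 1) (Eop n i (Eop n i f)) u = 0 ∧
    Eop n (i + 1) (Eop n (i + 1) (Eop n i f)) u
        - 2 * Eop n (i + 1) (Eop n i (Eop n (i + 1) f)) u
        + Eop n i (Eop n (i + 1) (Eop n (i + 1) f)) u = 0 ∧
    Fop n i (lam i) (Fop n i (lam i) (Fop n (i + 1) (lam (i + 1)) f)) u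
        - 2 * Fop n i (lam i) (Fop n (i + 1) (lam (i + 1)) (Fop n i (lam i) f)) u
        + Fop n (i + 1) (lam (i + 1)) (Fop n i (lam i) (Fop n i (lam i) f)) u = 0 ∧
    Fop n (i + 1) (lam (i + 1)) (Fop n (i + 1) (lam (i + 1)) (Fop n i (lam i) f)) u
        - 2 * Fop n (i + 1) (lam (i + 1)) (Fop n i (lam i) (Fop n (i + 1) (lam (i + 1)) f)) u
        + Fop n i (lam i) (Fop n (i + 1) (lam (i + 1)) (Fop n (i + 1) (lam (i + 1)) f)) u = 0 :=
  serre_relations_general n i hi hi' lam f u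

end
end
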